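/- arXiv:1003.5981 — 4 statements merged into one kernel-verified Lean document; each statement's English description precedes it below -/
import Mathlib

section
/- Let {·,·} be an arbitrary Poisson bracket on a commutative algebra A of smooth functions, and let x¹,x²,x³ ∈ A. Set γ² = {x¹,x²}² + {x²,x³}² + {x³,x¹}², and assume γ is invertible. Then for each i ∈ {1,2,3}: ∑_{j,k,l,n=1}^{3} (1/2) ε_{kln} { γ⁻² {xⁱ,xʲ}{xʲ,xᵏ} , γ⁻¹ {xˡ,xⁿ} } = 0. -/
open scoped BigOperators
noncomputable section

open Classical in
/-- The totally antisymmetric Levi-Civita symbol on three indices, `ε_{kln}` with `ε_{012} = 1`. -/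
def eps3 (k l n : Fin 3) : ℝ :=
  if h : Function.Bijective ![k, l, n] then
    ((Equiv.Perm.sign (Equiv.ofBijective ![k, l, n] h) : ℤ) : ℝ) else 0


-- auxiliary eps3 value lemmas
lemma eps3_rep₁ (k n : Fin 3) : eps3 k k n = 0 := by
  rw [eps3, dif_neg]; intro h
  exact absurd (h.injective (a₁ := 0) (a₂ := 1) rfl) (by decide)

lemma eps3_rep₂ (k n : Fin 3) : eps3 k n k = 0 := by
  rw [eps3, dif_neg]; intro h
  exact absurd (h.injective (a₁ := 0) (a₂ := 2) rfl) (by decide)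

lemma eps3_rep₃ (k n : Fin 3) : eps3 k n n = 0 := by
  rw [eps3, dif_neg]; intro h
  exact absurd (h.injective (a₁ := 1) (a₂ := 2) rfl) (by decide)

lemma eps3_012 : eps3 0 1 2 = 1 := by
  rw [eps3, dif_pos (by decide)]
  have h : Equiv.Perm.sign (Equiv.ofBijective ![(0:Fin 3),1,2] (by decide)) = 1 := by decide
  rw [h]; norm_num

lemma eps3_120 : eps3 1 2 0 = 1 := by
  rw [eps3, dif_pos (by decide)]
  have h : Equiv.Perm.sign (Equiv.ofBijective ![(1:Fin 3),2,0] (by decide)) = 1 := by decide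
  rw [h]; norm_num

lemma eps3_201 : eps3 2 0 1 = 1 := by
  rw [eps3, dif_pos (by decide)]
  have h : Equiv.Perm.sign (Equiv.ofBijective ![(2:Fin 3),0,1] (by decide)) = 1 := by decide
  rw [h]; norm_num

lemma eps3_021 : eps3 0 2 1 = -1 := by
  rw [eps3, dif_pos (by decide)]
  have h : Equiv.Perm.sign (Equiv.ofBijective ![(0:Fin 3),2,1] (by decide)) = -1 := by decide
  rw [h]; norm_num

lemma eps3_102 : eps3 1 0 2 = -1 := by
  rw [eps3, dif_pos (by decide)]
  have h : Equiv.Perm.sign (Equiv.ofBijective ![(1:Fin 3),0,2] (by decide)) = -1 := by decide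
  rw [h]; norm_num

lemma eps3_210 : eps3 2 1 0 = -1 := by
  rw [eps3, dif_pos (by decide)]
  have h : Equiv.Perm.sign (Equiv.ofBijective ![(2:Fin 3),1,0] (by decide)) = -1 := by decide
  rw [h]; norm_num

set_option maxHeartbeats 4000000

/-- For an arbitrary Poisson bracket on a commutative algebra `A` of smooth functions and
`x¹,x²,x³ ∈ A`, setting `γ² = {x¹,x²}² + {x²,x³}² + {x³,x¹}²` with `γ` invertible, for each `i`:
`∑_{j,k,l,n} (1/2) ε_{kln} { γ⁻² {xⁱ,xʲ}{xʲ,xᵏ} , γ⁻¹ {xˡ,xⁿ} } = 0`. -/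

theorem codazzi_mainardi_poisson_identity
    {A : Type*} [CommRing A] [Algebra ℝ A]
    (b : A → A → A)
    (hadd : ∀ f g h : A, b (f + g) h = b f h + b g h)
    (hsmul : ∀ (r : ℝ) (f g : A), b (r • f) g = r • b f g)
    (hanti : ∀ f g : A, b f g = - b g f)
    (hjacobi : ∀ f g h : A, b f (b g h) + b g (b h f) + b h (b f g) = 0)
    (hleibniz : ∀ f g h : A, b f (g * h) = b f g * h + g * b f h)
    (x : Fin 3 → A) (γ γinv : A)
    (hγ : γ * γ = b (x 0) (x 1) ^ 2 + b (x 1) (x 2) ^ 2 + b (x 2) (x 0) ^ 2)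
    (hγinv : γ * γinv = 1) (i : Fin 3) :
    ∑ j : Fin 3, ∑ k : Fin 3, ∑ l : Fin 3, ∑ n : Fin 3,
      ((1 / 2 : ℝ) * eps3 k l n) •
        b ((γinv * γinv) * (b (x i) (x j) * b (x j) (x k))) (γinv * b (x l) (x n)) = 0 := by
  -- abbreviations
  have half : ∀ u v : A, u + u = v + v → u = v := by
    intro u v h
    calc u = ((1/2:ℝ)*2) • u := by norm_num
    _ = (1/2:ℝ) • ((2:ℝ) • u) := by rw [smul_smul]
    _ = (1/2:ℝ) • (u + u) := by rw [two_smul]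
    _ = (1/2:ℝ) • (v + v) := by rw [h]
    _ = (1/2:ℝ) • ((2:ℝ) • v) := by rw [two_smul]
    _ = ((1/2:ℝ)*2) • v := by rw [smul_smul]
    _ = v := by norm_num
  have hzero_l : ∀ f : A, b 0 f = 0 := by
    intro f
    have h := hadd 0 0 f
    rw [add_zero] at h
    exact add_left_cancel (h.symm.trans (add_zero _).symm)
  have hzero_r : ∀ f : A, b f 0 = 0 := by
    intro f; rw [hanti, hzero_l, neg_zero]
  have haddr : ∀ f g h : A, b f (g + h) = b f g + b f h := by
    intro f g h
    rw [hanti, hadd, hanti f g, hanti f h]; ring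
  have hnegr : ∀ f g : A, b f (-g) = -(b f g) := by
    intro f g
    have h := haddr f g (-g)
    rw [add_neg_cancel, hzero_r] at h
    exact eq_neg_of_add_eq_zero_right h.symm
  have hnegl : ∀ f g : A, b (-f) g = -(b f g) := by
    intro f g
    rw [hanti, hnegr, hanti g f]; ring
  have hself : ∀ f : A, b f f = 0 := by
    intro f
    have h := hanti f f
    have h2 : b f f + b f f = 0 := by nth_rewrite 1 [h]; exact neg_add_cancel _
    have h3 : b f f = (0:A) + (0:A) → True := fun _ => trivial
    exact half _ _ (by rw [h2, add_zero])
  have hleibl : ∀ f g h : A, b (f*g) h = b f h * g + f * b g h := by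
    intro f g h
    rw [hanti, hleibniz, hanti h f, hanti h g]; ring
  have hb1 : ∀ f : A, b f 1 = 0 := by
    intro f
    have h := hleibniz f 1 1
    rw [mul_one, mul_one, one_mul] at h
    exact add_left_cancel (h.symm.trans (add_zero _).symm)
  -- bracket with γ
  have hγ2 : γ * γ = b (x 0) (x 1) * b (x 0) (x 1) + b (x 1) (x 2) * b (x 1) (x 2)
      + b (x 2) (x 0) * b (x 2) (x 0) := by rw [hγ]; ring
  have hbγ : ∀ f : A, b f γ = γinv * (b (x 0) (x 1) * b f (b (x 0) (x 1))
      + b (x 1) (x 2) * b f (b (x 1) (x 2)) + b (x 2) (x 0) * b f (b (x 2) (x 0))) := by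
    intro f
    have hcg := congrArg (b f) hγ2
    rw [hleibniz, haddr, haddr, hleibniz, hleibniz, hleibniz] at hcg
    have h4 : γ * b f γ = b (x 0) (x 1) * b f (b (x 0) (x 1))
        + b (x 1) (x 2) * b f (b (x 1) (x 2)) + b (x 2) (x 0) * b f (b (x 2) (x 0)) :=
      half _ _ (by linear_combination hcg)
    calc b f γ = (γ * γinv) * b f γ := by rw [hγinv, one_mul]
    _ = γinv * (γ * b f γ) := by ring
    _ = _ := by rw [h4]
  have hbginv : ∀ f : A, b f γinv = -(γinv * γinv * γinv * (b (x 0) (x 1) * b f (b (x 0) (x 1))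
      + b (x 1) (x 2) * b f (b (x 1) (x 2)) + b (x 2) (x 0) * b f (b (x 2) (x 0)))) := by
    intro f
    have h0 := hleibniz f γ γinv
    rw [hγinv, hb1] at h0
    have h3 : γ * b f γinv = -(b f γ * γinv) := by linear_combination (-1 : A) * h0
    have h5 : b f γinv = -(γinv * γinv * b f γ) := by
      calc b f γinv = γinv * (γ * b f γinv) := by
            rw [← mul_assoc, mul_comm γinv γ, hγinv, one_mul]
      _ = γinv * (-(b f γ * γinv)) := by rw [h3]
      _ = -(γinv * γinv * b f γ) := by ring
    rw [h5, hbγ f]; ring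
  have hγinvl : ∀ f : A, b γinv f = γinv * γinv * γinv * (b (x 0) (x 1) * b f (b (x 0) (x 1))
      + b (x 1) (x 2) * b f (b (x 1) (x 2)) + b (x 2) (x 0) * b f (b (x 2) (x 0))) := by
    intro f
    rw [hanti, hbginv f]; ring
  -- orientation lemmas
  have hx10 : b (x 1) (x 0) = -(b (x 0) (x 1)) := hanti _ _
  have hx21 : b (x 2) (x 1) = -(b (x 1) (x 2)) := hanti _ _
  have hx02 : b (x 0) (x 2) = -(b (x 2) (x 0)) := hanti _ _
  have hQP : b (b (x 1) (x 2)) (b (x 0) (x 1)) = -(b (b (x 0) (x 1)) (b (x 1) (x 2))) := hanti _ _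
  have hRQ : b (b (x 2) (x 0)) (b (x 1) (x 2)) = -(b (b (x 1) (x 2)) (b (x 2) (x 0))) := hanti _ _
  have hPR : b (b (x 0) (x 1)) (b (x 2) (x 0)) = -(b (b (x 2) (x 0)) (b (x 0) (x 1))) := hanti _ _
  have hrel : γinv * γinv * (b (x 0) (x 1) ^ 2 + b (x 1) (x 2) ^ 2 + b (x 2) (x 0) ^ 2) = 1 := by
    linear_combination (-(γinv*γinv)) * hγ + (1 + γ*γinv) * hγinv
  have hc : algebraMap ℝ A (1/2) + algebraMap ℝ A (1/2) = 1 := by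
    rw [← map_add]; norm_num
  have hi : i = 0 ∨ i = 1 ∨ i = 2 := by fin_cases i <;> simp
  rcases hi with rfl | rfl | rfl <;>
  · simp only [Fin.sum_univ_three, Fin.isValue, eps3_rep₁, eps3_rep₂, eps3_rep₃, eps3_012,
      eps3_120, eps3_201, eps3_021, eps3_102, eps3_210, mul_zero, zero_smul, mul_one,
      mul_neg_one, neg_smul, add_zero, zero_add, hself, hx10, hx21, hx02, mul_neg, neg_mul,
      neg_neg, hnegl, hnegr, zero_mul, hzero_l, hzero_r, smul_zero, smul_neg,
      hleibniz, hleibl, hadd, haddr, hbginv, hγinvl, hQP, hRQ, hPR, Algebra.smul_def, map_neg, neg_neg, mul_neg, neg_mul]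
    first
    | linear_combination (6 * algebraMap ℝ A (1/2) * γinv^3 *
        (b (x 0) (x 1) * b (b (x 0) (x 1)) (b (x 1) (x 2))
          - b (x 2) (x 0) * b (b (x 1) (x 2)) (b (x 2) (x 0)))) * hrel
    | linear_combination (6 * algebraMap ℝ A (1/2) * γinv^3 *
        (b (x 1) (x 2) * b (b (x 1) (x 2)) (b (x 2) (x 0))
          - b (x 0) (x 1) * b (b (x 2) (x 0)) (b (x 0) (x 1)))) * hrel
    | linear_combination (6 * algebraMap ℝ A (1/2) * γinv^3 *
        (b (x 2) (x 0) * b (b (x 2) (x 0)) (b (x 0) (x 1))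
          - b (x 1) (x 2) * b (b (x 0) (x 1)) (b (x 1) (x 2)))) * hrel
end
end

section
/- Let Σ be a surface with Poisson bracket {f,h} = ρ⁻¹ ε^{ab}(∂_a f)(∂_b h), let x: Σ → ℝ^m be an embedding and N = nⁱ∂_i a normal vector field along Σ. Then for any f ∈ C^∞(Σ) and any i, ∑_{j,k=1}^m { f{xⁱ,xʲ}{xʲ,nᵏ} , xᵏ } = ∑_{j,k=1}^m { f{xⁱ,xʲ}{xʲ,xᵏ} , nᵏ }. -/
open scoped BigOperators
noncomputable section

open Classical in
/-- The totally antisymmetric Levi-Civita symbol with `ε^{01⋯(n-1)} = 1`. -/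
def eps {n : ℕ} (v : Fin n → Fin n) : ℝ :=
  if h : Function.Bijective v then ((Equiv.Perm.sign (Equiv.ofBijective v h) : ℤ) : ℝ) else 0

/-- Partial derivative `∂_a f` of a function on the surface (chart `ℝ²`). -/
def pd {ν : ℕ} (a : Fin ν) (f : (Fin ν → ℝ) → ℝ) (p : Fin ν → ℝ) : ℝ :=
  fderiv ℝ f p (Pi.single a 1)

/-- The Poisson bracket `{f,h} = ρ⁻¹ ε^{ab} (∂_a f)(∂_b h)` on a surface, as a function. -/
def pbf (ρ f h : (Fin 2 → ℝ) → ℝ) : (Fin 2 → ℝ) → ℝ := fun p =>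
  (ρ p)⁻¹ * ∑ a : Fin 2, ∑ c : Fin 2, eps ![a, c] * pd a f p * pd c h p

lemma eps01 : eps ![(0:Fin 2), 1] = 1 := by
  have hb : Function.Bijective ![(0:Fin 2), 1] := by decide
  rw [eps, dif_pos hb]
  have : Equiv.ofBijective _ hb = Equiv.refl (Fin 2) := by
    apply Equiv.ext; intro y; simp only [Equiv.ofBijective_apply]; fin_cases y <;> rfl
  rw [this]; simp
lemma eps10 : eps ![(1:Fin 2), 0] = -1 := by
  have hb : Function.Bijective ![(1:Fin 2), 0] := by decide
  rw [eps, dif_pos hb]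
  have : Equiv.ofBijective _ hb = Equiv.swap 0 1 := by
    apply Equiv.ext; intro y; simp only [Equiv.ofBijective_apply]; fin_cases y <;> rfl
  rw [this]; simp [Equiv.Perm.sign_swap]
lemma eps00 : eps ![(0:Fin 2), 0] = 0 := by
  rw [eps, dif_neg]; decide
lemma eps11 : eps ![(1:Fin 2), 1] = 0 := by
  rw [eps, dif_neg]; decide

lemma pbf_eq (ρ f h : (Fin 2 → ℝ) → ℝ) (p : Fin 2 → ℝ) :
    pbf ρ f h p = (ρ p)⁻¹ * (pd 0 f p * pd 1 h p - pd 1 f p * pd 0 h p) := by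
  rw [pbf, Fin.sum_univ_two, Fin.sum_univ_two, Fin.sum_univ_two, eps00, eps01, eps10, eps11]
  ring

lemma smooth_pd {a : Fin 2} {g : (Fin 2 → ℝ) → ℝ} (hg : ContDiff ℝ (⊤ : ℕ∞) g) :
    ContDiff ℝ (⊤ : ℕ∞) (pd a g) := by
  have h1 : ContDiff ℝ (⊤ : ℕ∞) (fderiv ℝ g) := hg.fderiv_right (by simp)
  exact h1.clm_apply contDiff_const

lemma diff_pd {a : Fin 2} {g : (Fin 2 → ℝ) → ℝ} (hg : ContDiff ℝ (⊤ : ℕ∞) g) (p : Fin 2 → ℝ) :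
    DifferentiableAt ℝ (pd a g) p :=
  ((smooth_pd hg).differentiable (by simp)).differentiableAt

lemma pd_mul {a : Fin 2} {g h : (Fin 2 → ℝ) → ℝ} {p : Fin 2 → ℝ}
    (hg : DifferentiableAt ℝ g p) (hh : DifferentiableAt ℝ h p) :
    pd a (fun q => g q * h q) p = pd a g p * h p + g p * pd a h p := by
  unfold pd
  rw [fderiv_fun_mul hg hh]
  simp only [ContinuousLinearMap.add_apply, ContinuousLinearMap.smul_apply, smul_eq_mul]
  ring

lemma pd_sub {a : Fin 2} {g h : (Fin 2 → ℝ) → ℝ} {p : Fin 2 → ℝ}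
    (hg : DifferentiableAt ℝ g p) (hh : DifferentiableAt ℝ h p) :
    pd a (fun q => g q - h q) p = pd a g p - pd a h p := by
  unfold pd; rw [fderiv_fun_sub hg hh]; simp

lemma pd_sum {a : Fin 2} {m : ℕ} {F : Fin m → (Fin 2 → ℝ) → ℝ} {p : Fin 2 → ℝ}
    (hF : ∀ k, DifferentiableAt ℝ (F k) p) :
    pd a (fun q => ∑ k : Fin m, F k q) p = ∑ k : Fin m, pd a (F k) p := by
  unfold pd
  rw [fderiv_fun_sum (fun k _ => hF k)]
  simp

lemma pd_zero {a : Fin 2} {p : Fin 2 → ℝ} : pd a (fun _ => (0:ℝ)) p = 0 := by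
  unfold pd; rw [fderiv_fun_const]; simp

lemma pd_comm {a b : Fin 2} {g : (Fin 2 → ℝ) → ℝ} (hg : ContDiff ℝ (⊤ : ℕ∞) g) (p : Fin 2 → ℝ) :
    pd a (pd b g) p = pd b (pd a g) p := by
  have hsymm : IsSymmSndFDerivAt ℝ g p :=
    hg.contDiffAt.isSymmSndFDerivAt (by rw [minSmoothness_of_isRCLikeNormedField]; exact WithTop.coe_le_coe.mpr le_top)
  have key : ∀ (c d : Fin 2), pd c (pd d g) p
      = fderiv ℝ (fderiv ℝ g) p (Pi.single c 1) (Pi.single d 1) := by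
    intro c d
    unfold pd
    rw [show (fun q => (fderiv ℝ g q) (Pi.single d 1))
        = fun q => ((fderiv ℝ g q) : (Fin 2 → ℝ) →L[ℝ] ℝ) ((fun _ => (Pi.single d 1 : Fin 2 → ℝ)) q) from rfl]
    rw [fderiv_clm_apply (((hg.fderiv_right (m := (⊤ : ℕ∞)) (by simp)).differentiable (by simp)).differentiableAt)
      (differentiableAt_const _)]
    simp
  rw [key a b, key b a, hsymm]

section facts
variable {m : ℕ} {x nv : Fin m → (Fin 2 → ℝ) → ℝ}
variable (hx : ∀ i, ContDiff ℝ (⊤ : ℕ∞) (x i)) (hn : ∀ i, ContDiff ℝ (⊤ : ℕ∞) (nv i))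
variable (hnormal : ∀ (p : Fin 2 → ℝ) (a : Fin 2), ∑ i : Fin m, nv i p * pd a (x i) p = 0)
include hx hn hnormal

lemma factG (a b : Fin 2) (q : Fin 2 → ℝ) :
    ∑ k : Fin m, (pd b (nv k) q * pd a (x k) q + nv k q * pd b (pd a (x k)) q) = 0 := by
  have hzero : (fun q => ∑ k : Fin m, nv k q * pd a (x k) q) = (fun _ => (0:ℝ)) :=
    funext (fun q => hnormal q a)
  have h1 : pd b (fun q => ∑ k : Fin m, nv k q * pd a (x k) q) q = 0 := by
    rw [hzero]; exact pd_zero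
  rw [pd_sum (F := fun k q => nv k q * pd a (x k) q) (fun k => ((hn k).differentiable (by simp)).differentiableAt.mul
    (diff_pd (hx k) q))] at h1
  rw [← h1]
  exact Finset.sum_congr rfl fun k _ => by
    rw [pd_mul ((hn k).differentiable (by simp)).differentiableAt (diff_pd (hx k) q)]

lemma factF2 (q : Fin 2 → ℝ) :
    ∑ k : Fin m, (pd 0 (nv k) q * pd 1 (x k) q - pd 1 (nv k) q * pd 0 (x k) q) = 0 := by
  have h10 := factG hx hn hnormal 1 0 q
  have h01 := factG hx hn hnormal 0 1 q
  calc ∑ k : Fin m, (pd 0 (nv k) q * pd 1 (x k) q - pd 1 (nv k) q * pd 0 (x k) q)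
      = ∑ k : Fin m, ((pd 0 (nv k) q * pd 1 (x k) q + nv k q * pd 0 (pd 1 (x k)) q)
          - (pd 1 (nv k) q * pd 0 (x k) q + nv k q * pd 1 (pd 0 (x k)) q)) :=
        Finset.sum_congr rfl fun k _ => by rw [pd_comm (hx k)]; ring
    _ = (∑ k : Fin m, (pd 0 (nv k) q * pd 1 (x k) q + nv k q * pd 0 (pd 1 (x k)) q))
          - ∑ k : Fin m, (pd 1 (nv k) q * pd 0 (x k) q + nv k q * pd 1 (pd 0 (x k)) q) :=
        Finset.sum_sub_distrib _ _
    _ = 0 := by rw [h10, h01, sub_zero]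

lemma factF3 (b : Fin 2) (q : Fin 2 → ℝ) :
    ∑ k : Fin m, (pd b (pd 0 (nv k)) q * pd 1 (x k) q + pd 0 (nv k) q * pd b (pd 1 (x k)) q
      - (pd b (pd 1 (nv k)) q * pd 0 (x k) q + pd 1 (nv k) q * pd b (pd 0 (x k)) q)) = 0 := by
  have hzero : (fun q => ∑ k : Fin m,
      (pd 0 (nv k) q * pd 1 (x k) q - pd 1 (nv k) q * pd 0 (x k) q)) = (fun _ => (0:ℝ)) :=
    funext (fun q => factF2 hx hn hnormal q)
  have h1 : pd b (fun q => ∑ k : Fin m,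
      (pd 0 (nv k) q * pd 1 (x k) q - pd 1 (nv k) q * pd 0 (x k) q)) q = 0 := by
    rw [hzero]; exact pd_zero
  rw [pd_sum (F := fun k q => pd 0 (nv k) q * pd 1 (x k) q - pd 1 (nv k) q * pd 0 (x k) q) (fun k => ((diff_pd (hn k) q).mul (diff_pd (hx k) q)).sub
    ((diff_pd (hn k) q).mul (diff_pd (hx k) q)))] at h1
  rw [← h1]
  refine Finset.sum_congr rfl fun k _ => ?_
  rw [pd_sub (g := fun q => pd 0 (nv k) q * pd 1 (x k) q) (h := fun q => pd 1 (nv k) q * pd 0 (x k) q) ((diff_pd (hn k) q).mul (diff_pd (hx k) q))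
    ((diff_pd (hn k) q).mul (diff_pd (hx k) q)),
    pd_mul (diff_pd (hn k) q) (diff_pd (hx k) q),
    pd_mul (diff_pd (hn k) q) (diff_pd (hx k) q)]

end facts

lemma sdiff {g : (Fin 2 → ℝ) → ℝ} (hg : ContDiff ℝ (⊤ : ℕ∞) g) (p : Fin 2 → ℝ) :
    DifferentiableAt ℝ g p := (hg.differentiable (by simp)).differentiableAt

section pbflem
variable {ρ u v A w : (Fin 2 → ℝ) → ℝ}
variable (hρ : ∀ p, ρ p ≠ 0) (hρs : ContDiff ℝ (⊤ : ℕ∞) ρ)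
variable (hu : ContDiff ℝ (⊤ : ℕ∞) u) (hv : ContDiff ℝ (⊤ : ℕ∞) v)
include hρ hρs hu hv

lemma pbf_fun_eq : pbf ρ u v
    = fun q => (ρ q)⁻¹ * (pd 0 u q * pd 1 v q - pd 1 u q * pd 0 v q) :=
  funext fun q => pbf_eq ρ u v q

lemma smooth_pbf : ContDiff ℝ (⊤ : ℕ∞) (pbf ρ u v) := by
  rw [pbf_fun_eq (ρ := ρ) hρ hρs hu hv]
  exact (hρs.inv hρ).mul (((smooth_pd hu).mul (smooth_pd hv)).sub
    ((smooth_pd hu).mul (smooth_pd hv)))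

lemma pd_pbf (c : Fin 2) (p : Fin 2 → ℝ) :
    pd c (pbf ρ u v) p
      = pd c (fun q => (ρ q)⁻¹) p * (pd 0 u p * pd 1 v p - pd 1 u p * pd 0 v p)
        + (ρ p)⁻¹ * ((pd c (pd 0 u) p * pd 1 v p + pd 0 u p * pd c (pd 1 v) p)
          - (pd c (pd 1 u) p * pd 0 v p + pd 1 u p * pd c (pd 0 v) p)) := by
  rw [pbf_fun_eq (ρ := ρ) hρ hρs hu hv]
  rw [pd_mul (g := fun q => (ρ q)⁻¹)
      (h := fun q => pd 0 u q * pd 1 v q - pd 1 u q * pd 0 v q)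
      (sdiff (hρs.inv hρ) p)
      ((((smooth_pd hu).mul (smooth_pd hv)).sub
        ((smooth_pd hu).mul (smooth_pd hv))).differentiable (by simp)).differentiableAt]
  rw [pd_sub (g := fun q => pd 0 u q * pd 1 v q) (h := fun q => pd 1 u q * pd 0 v q)
      ((diff_pd hu p).mul (diff_pd hv p)) ((diff_pd hu p).mul (diff_pd hv p))]
  rw [pd_mul (g := pd 0 u) (h := pd 1 v) (diff_pd hu p) (diff_pd hv p)]
  rw [pd_mul (g := pd 1 u) (h := pd 0 v) (diff_pd hu p) (diff_pd hv p)]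

variable (hA : ContDiff ℝ (⊤ : ℕ∞) A) (hw : ContDiff ℝ (⊤ : ℕ∞) w)
include hA hw

lemma pbf_triple (p : Fin 2 → ℝ) :
    pbf ρ (fun q => A q * pbf ρ u v q) w p
      = (ρ p)⁻¹ *
        ((pd 0 A p * ((ρ p)⁻¹ * (pd 0 u p * pd 1 v p - pd 1 u p * pd 0 v p))
          + A p * (pd 0 (fun q => (ρ q)⁻¹) p * (pd 0 u p * pd 1 v p - pd 1 u p * pd 0 v p)
            + (ρ p)⁻¹ * ((pd 0 (pd 0 u) p * pd 1 v p + pd 0 u p * pd 0 (pd 1 v) p)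
              - (pd 0 (pd 1 u) p * pd 0 v p + pd 1 u p * pd 0 (pd 0 v) p)))) * pd 1 w p
        - (pd 1 A p * ((ρ p)⁻¹ * (pd 0 u p * pd 1 v p - pd 1 u p * pd 0 v p))
          + A p * (pd 1 (fun q => (ρ q)⁻¹) p * (pd 0 u p * pd 1 v p - pd 1 u p * pd 0 v p)
            + (ρ p)⁻¹ * ((pd 1 (pd 0 u) p * pd 1 v p + pd 0 u p * pd 1 (pd 1 v) p)
              - (pd 1 (pd 1 u) p * pd 0 v p + pd 1 u p * pd 1 (pd 0 v) p)))) * pd 0 w p) := by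
  have hB := smooth_pbf (ρ := ρ) hρ hρs hu hv
  have hmul : ∀ c : Fin 2, pd c (fun q => A q * pbf ρ u v q) p
      = pd c A p * pbf ρ u v p + A p * pd c (pbf ρ u v) p :=
    fun c => pd_mul (sdiff hA p) (sdiff hB p)
  rw [pbf_eq, hmul 0, hmul 1, pd_pbf hρ hρs hu hv 0 p, pd_pbf hρ hρs hu hv 1 p,
    pbf_eq]

end pbflem

set_option maxHeartbeats 1000000 in
lemma main_j {m : ℕ} {ρ u A : (Fin 2 → ℝ) → ℝ} {x nv : Fin m → (Fin 2 → ℝ) → ℝ}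
    (hρ : ∀ p, ρ p ≠ 0) (hρs : ContDiff ℝ (⊤ : ℕ∞) ρ)
    (hu : ContDiff ℝ (⊤ : ℕ∞) u) (hA : ContDiff ℝ (⊤ : ℕ∞) A)
    (hx : ∀ i, ContDiff ℝ (⊤ : ℕ∞) (x i)) (hn : ∀ i, ContDiff ℝ (⊤ : ℕ∞) (nv i))
    (hnormal : ∀ (p : Fin 2 → ℝ) (a : Fin 2), ∑ i : Fin m, nv i p * pd a (x i) p = 0)
    (p : Fin 2 → ℝ) :
    ∑ k : Fin m, pbf ρ (fun q => A q * pbf ρ u (nv k) q) (x k) p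
      = ∑ k : Fin m, pbf ρ (fun q => A q * pbf ρ u (x k) q) (nv k) p := by
  rw [← sub_eq_zero, ← Finset.sum_sub_distrib]
  have hF2 := factF2 hx hn hnormal p
  have hE1 := factF3 hx hn hnormal 1 p
  have hE0 : ∑ k : Fin m,
      (pd 0 (pd 0 (nv k)) p * pd 1 (x k) p + pd 0 (nv k) p * pd 1 (pd 0 (x k)) p
        - (pd 1 (pd 0 (nv k)) p * pd 0 (x k) p + pd 1 (nv k) p * pd 0 (pd 0 (x k)) p)) = 0 := by
    rw [← factF3 hx hn hnormal 0 p]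
    refine Finset.sum_congr rfl fun k _ => ?_
    rw [show pd 0 (pd 1 (x k)) p = pd 1 (pd 0 (x k)) p from pd_comm (hx k) p,
      show pd 0 (pd 1 (nv k)) p = pd 1 (pd 0 (nv k)) p from pd_comm (hn k) p]
  have key : ∀ k : Fin m,
      pbf ρ (fun q => A q * pbf ρ u (nv k) q) (x k) p
        - pbf ρ (fun q => A q * pbf ρ u (x k) q) (nv k) p
      = ((ρ p)⁻¹ * (ρ p)⁻¹ * (pd 1 A p * pd 0 u p - pd 0 A p * pd 1 u p)
          + (ρ p)⁻¹ * A p * (pd 1 (fun q => (ρ q)⁻¹) p * pd 0 u p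
              - pd 0 (fun q => (ρ q)⁻¹) p * pd 1 u p)
          + (ρ p)⁻¹ * (ρ p)⁻¹ * A p * (pd 1 (pd 0 u) p - pd 0 (pd 1 u) p))
          * (pd 0 (nv k) p * pd 1 (x k) p - pd 1 (nv k) p * pd 0 (x k) p)
        + ((ρ p)⁻¹ * (ρ p)⁻¹ * A p * pd 0 u p)
          * (pd 1 (pd 0 (nv k)) p * pd 1 (x k) p + pd 0 (nv k) p * pd 1 (pd 1 (x k)) p
            - (pd 1 (pd 1 (nv k)) p * pd 0 (x k) p + pd 1 (nv k) p * pd 1 (pd 0 (x k)) p))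
        + (-((ρ p)⁻¹ * (ρ p)⁻¹ * A p * pd 1 u p))
          * (pd 0 (pd 0 (nv k)) p * pd 1 (x k) p + pd 0 (nv k) p * pd 1 (pd 0 (x k)) p
            - (pd 1 (pd 0 (nv k)) p * pd 0 (x k) p + pd 1 (nv k) p * pd 0 (pd 0 (x k)) p)) := by
    intro k
    rw [pbf_triple hρ hρs hu (hn k) hA (hx k) p, pbf_triple hρ hρs hu (hx k) hA (hn k) p,
      show pd 0 (pd 1 (x k)) p = pd 1 (pd 0 (x k)) p from pd_comm (hx k) p,
      show pd 0 (pd 1 (nv k)) p = pd 1 (pd 0 (nv k)) p from pd_comm (hn k) p]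
    ring
  calc ∑ k : Fin m, (pbf ρ (fun q => A q * pbf ρ u (nv k) q) (x k) p
        - pbf ρ (fun q => A q * pbf ρ u (x k) q) (nv k) p)
      = ∑ k : Fin m, (_ + _ + _) := Finset.sum_congr rfl fun k _ => key k
    _ = 0 := by
      rw [Finset.sum_add_distrib, Finset.sum_add_distrib,
        ← Finset.mul_sum, ← Finset.mul_sum, ← Finset.mul_sum, hF2, hE1, hE0]
      ring

/-- For a surface `Σ` embedded in `ℝ^m` with normal vector field `N = nⁱ∂_i` and any
`f ∈ C^∞(Σ)`, `∑_{j,k} { f{xⁱ,xʲ}{xʲ,nᵏ} , xᵏ } = ∑_{j,k} { f{xⁱ,xʲ}{xʲ,xᵏ} , nᵏ }`. -/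
theorem pb_normal_exchange (m : ℕ)
    (ρ : (Fin 2 → ℝ) → ℝ) (x nv : Fin m → (Fin 2 → ℝ) → ℝ) (f : (Fin 2 → ℝ) → ℝ)
    (hρ : ∀ p, ρ p ≠ 0) (hρs : ContDiff ℝ (⊤ : ℕ∞) ρ) (hf : ContDiff ℝ (⊤ : ℕ∞) f)
    (hx : ∀ i, ContDiff ℝ (⊤ : ℕ∞) (x i)) (hn : ∀ i, ContDiff ℝ (⊤ : ℕ∞) (nv i))
    (hnormal : ∀ (p : Fin 2 → ℝ) (a : Fin 2), ∑ i : Fin m, nv i p * pd a (x i) p = 0)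
    (i : Fin m) (p : Fin 2 → ℝ) :
    ∑ j : Fin m, ∑ k : Fin m,
        pbf ρ (fun q => f q * pbf ρ (x i) (x j) q * pbf ρ (x j) (nv k) q) (x k) p =
      ∑ j : Fin m, ∑ k : Fin m,
        pbf ρ (fun q => f q * pbf ρ (x i) (x j) q * pbf ρ (x j) (x k) q) (nv k) p := by
  refine Finset.sum_congr rfl fun j _ => ?_
  exact main_j (A := fun q => f q * pbf ρ (x i) (x j) q) hρ hρs (hx j)
    (hf.mul (smooth_pbf hρ hρs (hx i) (hx j))) hx hn hnormal p
end
end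

section
/- In the setting of a hypersurface Σ^n ⊂ M^{n+1}, the normal vector Z = (γ n!)⁻¹ ḡ^{ij} ε_{j k₁ ⋯ k_n} {x^{k₁},…,x^{k_n}} ∂_i has unit length: ḡ(Z,Z) = 1. -/
/-!
Let `J = (∂_a x^i)` be the `(n+1) × n` Jacobian and `C_j = ε_{j k₁⋯k_n} J^{k₁}_1 ⋯ J^{k_n}_n`
its cofactor vector, so that `ε_{j k₁⋯k_n} {x^{k₁},…,x^{k_n}} = n! ρ⁻¹ C_j` and `Z` is a multiple
of `N = ḡ⁻¹ C`. Expanding along the first column, `det [e | J] = e · C` for every `e`; in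
particular `C` is orthogonal to the columns of `J`. Hence the Gram matrix `[N | J]ᵀ ḡ [N | J]` is
block diagonal with blocks `ḡ(N, N) = C · ḡ⁻¹ C` and the induced metric `g = Jᵀ ḡ J`, and taking
determinants gives `(C · ḡ⁻¹ C)² det ḡ = (C · ḡ⁻¹ C) det g`. As `det g ≠ 0` forces `C ≠ 0`, this
is `(C · ḡ⁻¹ C) det ḡ = det g`, which is exactly the normalisation `ḡ(Z, Z) = 1`.
-/

open scoped BigOperators
noncomputable section

/-- The Nambu bracket `{f₁,…,f_ν} = ρ⁻¹ ε^{a₁⋯a_ν} (∂_{a₁}f₁)⋯(∂_{a_ν}f_ν)`. -/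
def nb {ν : ℕ} (ρ : (Fin ν → ℝ) → ℝ) (f : Fin ν → (Fin ν → ℝ) → ℝ) (p : Fin ν → ℝ) : ℝ :=
  (ρ p)⁻¹ * ∑ σ : Fin ν → Fin ν, eps σ * ∏ a : Fin ν, pd (σ a) (f a) p

open Matrix

lemma eps_perm {m : ℕ} (σ : Equiv.Perm (Fin m)) : eps ⇑σ = (Equiv.Perm.sign σ : ℝ) := by
  rw [eps, dif_pos σ.bijective, Equiv.ofBijective_coe]

lemma eps_of_not_bijective {m : ℕ} {v : Fin m → Fin m} (hv : ¬ Function.Bijective v) :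
    eps v = 0 := by
  rw [eps, dif_neg hv]

lemma eps_eq_det {m : ℕ} (v : Fin m → Fin m) :
    eps v = det (of fun i j => if v i = j then (1 : ℝ) else 0) := by
  by_cases hv : Function.Bijective v
  · obtain ⟨σ, rfl⟩ : ∃ σ : Equiv.Perm (Fin m), ⇑σ = v := ⟨Equiv.ofBijective v hv, rfl⟩
    rw [eps_perm, ← det_permutation σ]
    congr 1
    ext i j
    simp [Equiv.Perm.permMatrix, PEquiv.toMatrix_apply, eq_comm]
  · obtain ⟨a, b, hab, hne⟩ : ∃ a b, v a = v b ∧ a ≠ b := by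
      simpa [Function.Injective] using fun h => hv ⟨h, Finite.surjective_of_injective h⟩
    rw [eps_of_not_bijective hv, det_zero_of_row_eq hne (by ext; simp [hab])]

lemma eps_comp_perm {m : ℕ} (v : Fin m → Fin m) (σ : Equiv.Perm (Fin m)) :
    eps (v ∘ σ) = Equiv.Perm.sign σ * eps v := by
  rw [eps_eq_det, eps_eq_det v, ← det_permute]
  rfl

lemma eps_cons_comp_perm {n : ℕ} (j : Fin (n + 1)) (k : Fin n → Fin (n + 1))
    (σ : Equiv.Perm (Fin n)) :
    eps (Fin.cons j (k ∘ σ)) = Equiv.Perm.sign σ * eps (Fin.cons j k) := by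
  have hσ : (Fin.cons j (k ∘ σ) : Fin (n + 1) → Fin (n + 1))
      = Fin.cons j k ∘ Equiv.Perm.decomposeFin.symm (0, σ) := by
    ext i
    cases i using Fin.cases <;> simp [Equiv.Perm.decomposeFin_symm_apply_succ]
  rw [hσ, eps_comp_perm, Equiv.Perm.decomposeFin.symm_sign]
  simp

lemma sum_eps_mul {m : ℕ} (P : (Fin m → Fin m) → ℝ) :
    ∑ v, eps v * P v = ∑ σ : Equiv.Perm (Fin m), Equiv.Perm.sign σ * P σ := by
  refine (Finset.sum_of_injOn (fun σ : Equiv.Perm (Fin m) => ⇑σ) DFunLike.coe_injective.injOn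
    (by simp) (fun v _ hv => ?_) (fun σ _ => by rw [eps_perm])).symm
  rw [eps_of_not_bijective fun h => hv ⟨Equiv.ofBijective v h, by simp, rfl⟩, zero_mul]

lemma sum_eps_mul_prod {m : ℕ} (F : Fin m → Fin m → ℝ) :
    ∑ v, eps v * ∏ a, F (v a) a = det (of F) := by
  rw [det_apply', sum_eps_mul]
  rfl

def cofactorVec {n : ℕ} (J : Matrix (Fin (n + 1)) (Fin n) ℝ) (j : Fin (n + 1)) : ℝ :=
  ∑ k : Fin n → Fin (n + 1), eps (Fin.cons j k) * ∏ a, J (k a) a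

lemma det_of_vecCons_eq_dotProduct_cofactorVec {n : ℕ} (J : Matrix (Fin (n + 1)) (Fin n) ℝ)
    (e : Fin (n + 1) → ℝ) :
    det (of fun i => vecCons (e i) (J i)) = e ⬝ᵥ cofactorVec J := by
  rw [← sum_eps_mul_prod, ← (Fin.consEquiv fun _ => Fin (n + 1)).sum_comp,
    Fintype.sum_prod_type]
  refine Finset.sum_congr rfl fun j _ => ?_
  rw [cofactorVec, Finset.mul_sum]
  refine Finset.sum_congr rfl fun k _ => ?_
  simp only [Fin.consEquiv, Equiv.coe_fn_mk, Fin.prod_univ_succ, Fin.cons_zero, Fin.cons_succ,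
    cons_val_zero, cons_val_succ]
  ring

lemma transpose_mulVec_cofactorVec {n : ℕ} (J : Matrix (Fin (n + 1)) (Fin n) ℝ) :
    Jᵀ *ᵥ cofactorVec J = 0 := by
  ext b
  rw [mulVec, ← det_of_vecCons_eq_dotProduct_cofactorVec]
  exact det_zero_of_column_eq (Fin.succ_ne_zero b).symm fun i => by simp

lemma sum_eps_cons_mul_prod_perm {n : ℕ} (J : Matrix (Fin (n + 1)) (Fin n) ℝ) (j : Fin (n + 1))
    (σ : Equiv.Perm (Fin n)) :
    ∑ k : Fin n → Fin (n + 1), eps (Fin.cons j k) * ∏ a, J (k a) (σ a)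
      = Equiv.Perm.sign σ * cofactorVec J j := by
  rw [cofactorVec, Finset.mul_sum, ← (Equiv.arrowCongr σ.symm (Equiv.refl _)).sum_comp]
  refine Finset.sum_congr rfl fun k _ => ?_
  change eps (Fin.cons j (k ∘ σ)) * ∏ a, J (k (σ a)) (σ a) = _
  rw [eps_cons_comp_perm, Equiv.prod_comp σ fun b => J (k b) b, mul_assoc]

lemma sum_eps_cons_mul_sum_eps_mul_prod {n : ℕ} (J : Matrix (Fin (n + 1)) (Fin n) ℝ)
    (j : Fin (n + 1)) :
    ∑ k : Fin n → Fin (n + 1), eps (Fin.cons j k) * ∑ v, eps v * ∏ a, J (k a) (v a)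
      = n.factorial * cofactorVec J j := by
  calc ∑ k : Fin n → Fin (n + 1), eps (Fin.cons j k) * ∑ v, eps v * ∏ a, J (k a) (v a)
      = ∑ σ : Equiv.Perm (Fin n), Equiv.Perm.sign σ *
          ∑ k : Fin n → Fin (n + 1), eps (Fin.cons j k) * ∏ a, J (k a) (σ a) := by
        simp_rw [sum_eps_mul, Finset.mul_sum]
        rw [Finset.sum_comm]
        simp only [mul_left_comm]
    _ = ∑ _σ : Equiv.Perm (Fin n), cofactorVec J j := by
        simp [sum_eps_cons_mul_prod_perm, ← mul_assoc, ← Int.cast_mul, ← Units.val_mul]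
    _ = n.factorial * cofactorVec J j := by simp [Fintype.card_perm]

lemma sum_eps_cons_mul_nb {n : ℕ} (ρ : (Fin n → ℝ) → ℝ) (x : Fin (n + 1) → (Fin n → ℝ) → ℝ)
    (p : Fin n → ℝ) (j : Fin (n + 1)) :
    ∑ k : Fin n → Fin (n + 1), eps (Fin.cons j k) * nb ρ (fun l => x (k l)) p
      = (ρ p)⁻¹ * n.factorial * cofactorVec (of fun i a => pd a (x i) p) j := by
  simp only [nb, mul_left_comm (eps _), ← Finset.mul_sum, mul_assoc]
  rw [← sum_eps_cons_mul_sum_eps_mul_prod]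
  rfl

lemma sq_dotProduct_cofactorVec_mul_det {n : ℕ} (M : Matrix (Fin (n + 1)) (Fin (n + 1)) ℝ)
    (J : Matrix (Fin (n + 1)) (Fin n) ℝ) (e : Fin (n + 1) → ℝ) (he : Jᵀ *ᵥ (M *ᵥ e) = 0) :
    (e ⬝ᵥ cofactorVec J) ^ 2 * det M = (e ⬝ᵥ M *ᵥ e) * det (Jᵀ * M * J) := by
  set B : Matrix (Fin (n + 1)) (Fin (n + 1)) ℝ := of fun i => vecCons (e i) (J i)
  have hcol : ∀ c, (Bᵀ * M * B) c 0 = ∑ i, B i c * (M *ᵥ e) i := fun c => by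
    simp only [B, mul_apply, mulVec, dotProduct, Finset.sum_mul, Finset.mul_sum]
    rw [Finset.sum_comm]
    simp [mul_assoc]
  have hcol_succ : ∀ a : Fin n, (Bᵀ * M * B) a.succ 0 = 0 := fun a => by
    simpa [hcol, B, mulVec, dotProduct] using congrFun he a
  have hminor : (Bᵀ * M * B).submatrix Fin.succ Fin.succ = Jᵀ * M * J := by
    ext a b
    simp [B, mul_apply]
  calc (e ⬝ᵥ cofactorVec J) ^ 2 * det M = det (Bᵀ * M * B) := by
        rw [det_mul, det_mul, det_transpose, det_of_vecCons_eq_dotProduct_cofactorVec]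
        ring
    _ = (e ⬝ᵥ M *ᵥ e) * det (Jᵀ * M * J) := by
        rw [det_succ_column_zero, Fin.sum_univ_succ]
        simp [hcol_succ, hminor, hcol, B, dotProduct]

lemma cofactorVec_ne_zero {n : ℕ} {M : Matrix (Fin (n + 1)) (Fin (n + 1)) ℝ} (hM : M.PosDef)
    {J : Matrix (Fin (n + 1)) (Fin n) ℝ} (hJ : det (Jᵀ * M * J) ≠ 0) : cofactorVec J ≠ 0 := by
  obtain ⟨e, he, he0⟩ := Submodule.exists_mem_ne_zero_of_ne_bot
    ((Jᵀ * M).mulVecLin.ker_ne_bot_of_finrank_lt (by simp))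
  have he : (Jᵀ * M) *ᵥ e = 0 := he
  rw [← mulVec_mulVec] at he
  have hkey := sq_dotProduct_cofactorVec_mul_det M J e he
  have hpos : 0 < e ⬝ᵥ M *ᵥ e := by simpa using hM.dotProduct_mulVec_pos he0
  intro hC
  simp [hC, hpos.ne', hJ] at hkey

lemma mulVec_nonsing_inv_mulVec {m R : Type*} [Fintype m] [DecidableEq m] [CommRing R]
    {M : Matrix m m R} (hM : IsUnit M.det) (v : m → R) : M *ᵥ (M⁻¹ *ᵥ v) = v := by
  rw [mulVec_mulVec, mul_nonsing_inv _ hM, one_mulVec]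

lemma cofactorVec_dotProduct_inv_mulVec_mul_det {n : ℕ}
    {M : Matrix (Fin (n + 1)) (Fin (n + 1)) ℝ} (hM : M.PosDef)
    {J : Matrix (Fin (n + 1)) (Fin n) ℝ} (hJ : det (Jᵀ * M * J) ≠ 0) :
    (cofactorVec J ⬝ᵥ M⁻¹ *ᵥ cofactorVec J) * det M = det (Jᵀ * M * J) := by
  set C := cofactorVec J
  set s := C ⬝ᵥ M⁻¹ *ᵥ C
  have hMC := mulVec_nonsing_inv_mulVec hM.det_pos.ne'.isUnit C
  have hkey := sq_dotProduct_cofactorVec_mul_det M J (M⁻¹ *ᵥ C)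
    (by rw [hMC]; exact transpose_mulVec_cofactorVec J)
  rw [hMC, dotProduct_comm] at hkey
  have hs : 0 < s := by simpa using hM.inv.dotProduct_mulVec_pos (cofactorVec_ne_zero hM hJ)
  exact mul_left_cancel₀ hs.ne' (by linear_combination hkey)

lemma sum_sum_mul_mul_eq_dotProduct_mulVec {m : Type*} [Fintype m] (M : Matrix m m ℝ)
    (v : m → ℝ) : ∑ i, ∑ j, M i j * v i * v j = v ⬝ᵥ M *ᵥ v := by
  simp only [dotProduct, mulVec, Finset.mul_sum]
  exact Finset.sum_congr rfl fun i _ => Finset.sum_congr rfl fun j _ => by ring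

lemma of_sum_sum_mul_mul_eq_transpose_mul_mul {m k : Type*} [Fintype m] (M : Matrix m m ℝ)
    (J : Matrix m k ℝ) : (of fun a c => ∑ i, ∑ j, M i j * J i a * J j c) = Jᵀ * M * J := by
  ext a c
  simp only [of_apply, mul_apply, transpose_apply, Finset.sum_mul]
  rw [Finset.sum_comm]
  simp only [mul_comm, mul_left_comm]

/-- For a hypersurface `Σ^n ⊂ M^{n+1}`, the normal vector
`Z = (γ n!)⁻¹ ḡ^{ij} ε_{j k₁⋯k_n} {x^{k₁},…,x^{k_n}} ∂_i` has unit length: `ḡ(Z,Z) = 1`. -/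
theorem Z_unit_length (n : ℕ)
    (ρ : (Fin n → ℝ) → ℝ)
    (x : Fin (n + 1) → (Fin n → ℝ) → ℝ)
    (gbar : (Fin n → ℝ) → Matrix (Fin (n + 1)) (Fin (n + 1)) ℝ)
    (p : Fin n → ℝ)
    (hgbar : (gbar p).PosDef)
    (hρ : ρ p ≠ 0)
    (gind : Matrix (Fin n) (Fin n) ℝ)
    (hgind : gind = Matrix.of fun a c =>
      ∑ i, ∑ j, gbar p i j * pd a (x i) p * pd c (x j) p)
    (hgpos : 0 < gind.det)
    (γ : ℝ) (hγ : γ = Real.sqrt gind.det / ρ p)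
    (Z : Fin (n + 1) → ℝ)
    (hZ : Z = fun i => (γ * (n.factorial : ℝ))⁻¹ *
      ∑ j, (gbar p)⁻¹ i j *
        ∑ k : Fin n → Fin (n + 1),
          (Real.sqrt (gbar p).det * eps (Fin.cons j k)) * nb ρ (fun l => x (k l)) p) :
    ∑ i, ∑ j, gbar p i j * Z i * Z j = 1 := by
  set M := gbar p
  set J : Matrix (Fin (n + 1)) (Fin n) ℝ := of fun i a => pd a (x i) p
  set C := cofactorVec J
  have hgJ : gind = Jᵀ * M * J := hgind.trans (of_sum_sum_mul_mul_eq_transpose_mul_mul M J)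
  have hZC : Z = (Real.sqrt M.det / (γ * ρ p)) • (M⁻¹ *ᵥ C) := by
    ext i
    simp only [hZ, mul_assoc (Real.sqrt M.det), ← Finset.mul_sum, sum_eps_cons_mul_nb]
    simp only [Pi.smul_apply, smul_eq_mul, mulVec, dotProduct, Finset.mul_sum]
    refine Finset.sum_congr rfl fun j _ => ?_
    field_simp
    rfl
  have hMC := mulVec_nonsing_inv_mulVec hgbar.det_pos.ne'.isUnit C
  have hs : (C ⬝ᵥ M⁻¹ *ᵥ C) * M.det = gind.det :=
    hgJ ▸ cofactorVec_dotProduct_inv_mulVec_mul_det hgbar (hgJ ▸ hgpos.ne')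
  have hγρ : γ * ρ p = Real.sqrt gind.det := by rw [hγ, div_mul_cancel₀ _ hρ]
  calc ∑ i, ∑ j, M i j * Z i * Z j = Z ⬝ᵥ M *ᵥ Z := sum_sum_mul_mul_eq_dotProduct_mulVec M Z
    _ = M.det / gind.det * (C ⬝ᵥ M⁻¹ *ᵥ C) := by
        rw [hZC, mulVec_smul, hMC, smul_dotProduct, dotProduct_smul, dotProduct_comm, hγρ,
          smul_eq_mul, smul_eq_mul, ← mul_assoc, ← sq, div_pow,
          Real.sq_sqrt hgbar.det_pos.le, Real.sq_sqrt hgpos.le]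
    _ = 1 := by rw [div_mul_eq_mul_div, mul_comm, hs, div_self hgpos.ne']
end
end

section
/- With P^{iJ} = (1/√((n−1)!)) {xⁱ, x^{j₁},…,x^{j_{n−1}}} and (P²)^{ik} = P^{iI} P^{kJ} ḡ_{IJ}, for any X ∈ TM it holds that P²(X) = γ² ḡ(X, e_a) g^{ab} e_b. Consequently, for any tangent vector Y ∈ TΣ, P²(Y) = γ² Y. -/
/-!
Let `e` be the `n × m` matrix of derivatives `∂_a xⁱ`. The bracket `{xⁱ, x^{j₁}, …, x^{j_{n-1}}}`
is `ρ⁻¹` times the maximal minor of `e` on the columns `(i, j₁, …, j_{n-1})`. Expanding both minors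
of `P^{iI} P^{kJ} ḡ_{IJ}` over permutations `σ, τ`, the contraction over `I, J` turns the products
of `ḡ` into products of entries of `g = e ḡ eᵀ`. For fixed `σ`, the sum over `τ` is a determinant
of `g` with one row replaced, i.e. a cofactor, and each cofactor occurs for `(n-1)!` permutations
`σ`. Hence `P² = ρ⁻² eᵀ adj(g) e = γ² eᵀ g⁻¹ e`. This gives the first formula, and the second
follows from `e ḡ eᵀ g⁻¹ = 1`.
-/

open scoped BigOperators
noncomputable section

open Matrix Equiv

section Determinant

variable {R : Type*} [CommRing R]

lemma sum_perm_apply_zero {M : Type*} [AddCommMonoid M] {d : ℕ} (f : Fin (d + 1) → M) :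
    ∑ σ : Perm (Fin (d + 1)), f (σ 0) = d.factorial • ∑ a, f a := by
  rw [← Equiv.sum_comp Perm.decomposeFin.symm, Fintype.sum_prod_type]
  simp [Finset.smul_sum, Fintype.card_perm]

lemma det_updateRow_eq_vecMul_adjugate {n : Type*} [Fintype n] [DecidableEq n]
    (A : Matrix n n R) (a : n) (H : n → R) : (A.updateRow a H).det = (H ᵥ* A.adjugate) a := by
  rw [← cramer_transpose_apply, cramer_eq_adjugate_mulVec, ← adjugate_transpose, mulVec_transpose]

lemma det_submatrix_cons {ι : Type*} {d : ℕ} (E : Matrix (Fin (d + 1)) ι R) (i : ι)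
    (J : Fin d → ι) :
    (E.submatrix id (Fin.cons i J)).det = ∑ σ : Perm (Fin (d + 1)),
      ((Perm.sign σ : ℤ) : R) * (E (σ 0) i * ∏ l, E (σ l.succ) (J l)) := by
  simp only [det_apply', Fin.prod_univ_succ, submatrix_apply, id, Fin.cons_zero, Fin.cons_succ]

/-- The left side is the Leibniz expansion of `A.updateRow (σ 0) H` with rows reordered by `σ`. -/
lemma sum_sign_mul_prod_succ {d : ℕ} (A : Matrix (Fin (d + 1)) (Fin (d + 1)) R)
    (H : Fin (d + 1) → R) (σ : Perm (Fin (d + 1))) :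
    ∑ τ : Perm (Fin (d + 1)), ((Perm.sign τ : ℤ) : R) *
        (H (τ 0) * ∏ l : Fin d, A (σ l.succ) (τ l.succ)) =
      Perm.sign σ * (A.updateRow (σ 0) H).det := by
  rw [← det_permute, ← det_transpose, det_apply']
  refine Finset.sum_congr rfl fun τ _ => ?_
  rw [Fin.prod_univ_succ]
  congr 2
  · simp
  · refine Finset.prod_congr rfl fun l _ => ?_
    have hne : σ l.succ ≠ σ 0 := σ.injective.ne (Fin.succ_ne_zero l)
    simp [hne]

lemma sum_prod_mul_prod_mul_prod {n ι : Type*} [Fintype ι] {d : ℕ} (E : Matrix n ι R)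
    (G : Matrix ι ι R) (r s : Fin d → n) :
    ∑ J : Fin d → ι, ∑ J' : Fin d → ι,
        (∏ l, E (r l) (J l)) * (∏ l, E (s l) (J' l)) * ∏ l, G (J l) (J' l) =
      ∏ l, (E * G * Eᵀ) (r l) (s l) := by
  have entry : ∀ a c, (E * G * Eᵀ) a c = ∑ j, ∑ j', E a j * E c j' * G j j' := by
    intro a c
    simp only [mul_apply, transpose_apply, Finset.sum_mul]
    rw [Finset.sum_comm]
    exact Finset.sum_congr rfl fun _ _ => Finset.sum_congr rfl fun _ _ => by ring
  simp only [entry, Finset.prod_univ_sum, Fintype.piFinset_univ, ← Finset.prod_mul_distrib]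

theorem sum_det_cons_mul_det_cons_mul_prod {ι : Type*} [Fintype ι] [DecidableEq ι] {d : ℕ}
    (E : Matrix (Fin (d + 1)) ι R) (G : Matrix ι ι R) (i k : ι) :
    ∑ J : Fin d → ι, ∑ J' : Fin d → ι,
        (E.submatrix id (Fin.cons i J)).det * (E.submatrix id (Fin.cons k J')).det *
          ∏ l, G (J l) (J' l) =
      d.factorial * (Eᵀ * (E * G * Eᵀ).adjugate * E) k i := by
  set g := E * G * Eᵀ
  set ε : Perm (Fin (d + 1)) → R := fun σ => ((Perm.sign σ : ℤ) : R)
  set H : Fin (d + 1) → R := fun c => E c k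
  calc _ = ∑ σ : Perm (Fin (d + 1)), ε σ * E (σ 0) i * ∑ τ : Perm (Fin (d + 1)), ε τ *
        (H (τ 0) * ∑ J : Fin d → ι, ∑ J' : Fin d → ι, (∏ l, E (σ l.succ) (J l)) *
          (∏ l, E (τ l.succ) (J' l)) * ∏ l, G (J l) (J' l)) := by
        simp only [det_submatrix_cons, Finset.sum_mul, Finset.mul_sum]
        simp_rw [Finset.sum_comm (γ := Fin d → ι) (α := Perm (Fin (d + 1)))]
        rw [Finset.sum_comm]
        refine Finset.sum_congr rfl fun _ _ => Finset.sum_congr rfl fun _ _ => ?_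
        exact Finset.sum_congr rfl fun _ _ => Finset.sum_congr rfl fun _ _ => by ring
    _ = ∑ σ : Perm (Fin (d + 1)), ε σ * E (σ 0) i * (ε σ * (g.updateRow (σ 0) H).det) := by
        refine Finset.sum_congr rfl fun σ _ => ?_
        simp only [sum_prod_mul_prod_mul_prod, ε]
        exact congrArg _ (sum_sign_mul_prod_succ g H σ)
    _ = ∑ σ : Perm (Fin (d + 1)), E (σ 0) i * (g.updateRow (σ 0) H).det := by
        refine Finset.sum_congr rfl fun σ _ => ?_
        have hsign : ε σ * ε σ = 1 := by simp [ε, ← Int.cast_mul, ← Units.val_mul]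
        linear_combination (E (σ 0) i * (g.updateRow (σ 0) H).det) * hsign
    _ = d.factorial * (Eᵀ * g.adjugate * E) k i := by
        rw [sum_perm_apply_zero (fun a => E a i * (g.updateRow a H).det), nsmul_eq_mul]
        simp only [det_updateRow_eq_vecMul_adjugate, vecMul, dotProduct, mul_apply,
          transpose_apply, Finset.mul_sum, Finset.sum_mul, H]
        exact Finset.sum_congr rfl fun _ _ => Finset.sum_congr rfl fun _ _ => by ring

end Determinant

section VectorAlgebra

variable {R ι κ : Type*} [CommSemiring R] [Fintype ι]

lemma of_sum_sum_mul_mul_eq_mul_mul_transpose (E : Matrix κ ι R) (G : Matrix ι ι R) :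
    (Matrix.of fun a c => ∑ i, ∑ j, G i j * E a i * E c j) = E * G * Eᵀ := by
  ext a c
  simp only [of_apply, mul_apply, transpose_apply, Finset.sum_mul]
  rw [Finset.sum_comm]
  exact Finset.sum_congr rfl fun _ _ => Finset.sum_congr rfl fun _ _ => by ring

lemma sum_sum_mul_mul_eq_vecMul {μ : Type*} [Fintype κ] (v : κ → R) (A : Matrix κ ι R)
    (B : Matrix ι μ R) (i : μ) : ∑ a, ∑ c, v a * A a c * B c i = (v ᵥ* (A * B)) i := by
  rw [← vecMul_vecMul]
  simp only [vecMul, dotProduct, Finset.sum_mul]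
  rw [Finset.sum_comm]

lemma sum_sum_transpose_mul_mul_apply_mul [Fintype κ] (E : Matrix κ ι R) (B : Matrix κ κ R)
    (G : Matrix ι ι R) (X : ι → R) (i : ι) :
    ∑ j, ∑ k, (Eᵀ * B * E) j i * G j k * X k = ((E *ᵥ (G *ᵥ X)) ᵥ* (B * E)) i := by
  have hvec : ∑ j, ∑ k, (Eᵀ * B * E) j i * G j k * X k = ((G *ᵥ X) ᵥ* (Eᵀ * B * E)) i := by
    simp only [vecMul, mulVec, dotProduct, Finset.sum_mul]
    exact Finset.sum_congr rfl fun _ _ => Finset.sum_congr rfl fun _ _ => by ring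
  rw [hvec, Matrix.mul_assoc, ← vecMul_vecMul, vecMul_transpose]

lemma mulVec_mulVec_of_transpose_eq {G : Matrix ι ι R} (hG : Gᵀ = G) (E : Matrix κ ι R)
    (X : ι → R) : E *ᵥ (G *ᵥ X) = fun a => ∑ j, ∑ k, G j k * X j * E a k := by
  ext a
  simp only [mulVec, dotProduct, Finset.mul_sum]
  rw [Finset.sum_comm]
  refine Finset.sum_congr rfl fun j _ => Finset.sum_congr rfl fun k _ => ?_
  rw [← congrFun (congrFun hG j) k, transpose_apply]
  ring

end VectorAlgebra

lemma mulVec_mulVec_vecMul_vecMul_inv_mul {R ι κ : Type*} [Field R] [Fintype ι] [Fintype κ]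
    [DecidableEq κ] {G : Matrix ι ι R} (hG : Gᵀ = G) {E : Matrix κ ι R}
    (hdet : (E * G * Eᵀ).det ≠ 0) (Y : κ → R) :
    (E *ᵥ (G *ᵥ (Y ᵥ* E))) ᵥ* ((E * G * Eᵀ)⁻¹ * E) = Y ᵥ* E := by
  have hgT : (E * G * Eᵀ)ᵀ = E * G * Eᵀ := by
    rw [transpose_mul, transpose_mul, transpose_transpose, hG, Matrix.mul_assoc]
  rw [← mulVec_transpose E Y, mulVec_mulVec, mulVec_mulVec, ← vecMul_transpose, hgT,
    vecMul_vecMul, ← Matrix.mul_assoc, mul_nonsing_inv _ hdet.isUnit, Matrix.one_mul,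
    mulVec_transpose]

lemma sq_sqrt_det_div_smul_inv {n : Type*} [Fintype n] [DecidableEq n] {A : Matrix n n ℝ}
    (hA : 0 < A.det) (r : ℝ) : (Real.sqrt A.det / r) ^ 2 • A⁻¹ = r⁻¹ ^ 2 • A.adjugate := by
  rw [div_pow, Real.sq_sqrt hA.le, Matrix.inv_def, smul_smul, Ring.inverse_eq_inv',
    div_mul_eq_mul_div, mul_inv_cancel₀ hA.ne', inv_pow, one_div]

lemma sum_eps_mul_eq_sum_perm {k : ℕ} (g : (Fin k → Fin k) → ℝ) :
    ∑ v : Fin k → Fin k, eps v * g v = ∑ σ : Perm (Fin k), ((Perm.sign σ : ℤ) : ℝ) * g σ := by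
  refine (Fintype.sum_of_injective _ DFunLike.coe_injective _ _ (fun v hv => ?_) fun σ => ?_).symm
  · have hb : ¬ Function.Bijective v := fun hb => hv ⟨Equiv.ofBijective v hb, rfl⟩
    rw [eps, dif_neg hb, zero_mul]
  · rw [eps, dif_pos σ.bijective,
      show Equiv.ofBijective σ σ.bijective = σ from Equiv.ext fun _ => rfl]

lemma nb_eq_inv_mul_det {ν : ℕ} (ρ : (Fin ν → ℝ) → ℝ) (f : Fin ν → (Fin ν → ℝ) → ℝ)
    (p : Fin ν → ℝ) : nb ρ f p = (ρ p)⁻¹ * (Matrix.of fun a b => pd a (f b) p).det := by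
  rw [nb, sum_eps_mul_eq_sum_perm, det_apply']
  rfl

def tangentFrame {ν m : ℕ} (x : Fin m → (Fin ν → ℝ) → ℝ) (p : Fin ν → ℝ) :
    Matrix (Fin ν) (Fin m) ℝ :=
  .of fun a i => pd a (x i) p

lemma nb_cons_eq_inv_mul_det_submatrix {d m : ℕ} (ρ : (Fin (d + 1) → ℝ) → ℝ)
    (x : Fin m → (Fin (d + 1) → ℝ) → ℝ) (p : Fin (d + 1) → ℝ) (i : Fin m) (J : Fin d → Fin m) :
    nb ρ (Fin.cons (x i) fun l => x (J l)) p =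
      (ρ p)⁻¹ * ((tangentFrame x p).submatrix id (Fin.cons i J)).det := by
  rw [nb_eq_inv_mul_det]
  congr
  ext a b
  cases b using Fin.cases <;> rfl

theorem sum_nb_cons_mul_nb_cons_mul_prod {d m : ℕ} (ρ : (Fin (d + 1) → ℝ) → ℝ)
    (x : Fin m → (Fin (d + 1) → ℝ) → ℝ) (G : Matrix (Fin m) (Fin m) ℝ) (p : Fin (d + 1) → ℝ)
    (i k : Fin m) :
    ∑ J : Fin d → Fin m, ∑ J' : Fin d → Fin m,
        (Real.sqrt d.factorial)⁻¹ * nb ρ (Fin.cons (x i) fun l => x (J l)) p *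
          ((Real.sqrt d.factorial)⁻¹ * nb ρ (Fin.cons (x k) fun l => x (J' l)) p) *
            ∏ l, G (J l) (J' l) =
      (ρ p)⁻¹ ^ 2 * ((tangentFrame x p)ᵀ *
        (tangentFrame x p * G * (tangentFrame x p)ᵀ).adjugate * tangentFrame x p) k i := by
  have hfact : (Real.sqrt d.factorial)⁻¹ ^ 2 * d.factorial = 1 := by
    rw [inv_pow, Real.sq_sqrt (Nat.cast_nonneg _), inv_mul_cancel₀ (by positivity)]
  set E := tangentFrame x p
  calc _ = (Real.sqrt d.factorial)⁻¹ ^ 2 * (ρ p)⁻¹ ^ 2 *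
        ∑ J : Fin d → Fin m, ∑ J' : Fin d → Fin m, (E.submatrix id (Fin.cons i J)).det *
          (E.submatrix id (Fin.cons k J')).det * ∏ l, G (J l) (J' l) := by
        simp only [nb_cons_eq_inv_mul_det_submatrix, Finset.mul_sum]
        exact Finset.sum_congr rfl fun _ _ => Finset.sum_congr rfl fun _ _ => by ring
    _ = _ := by
        rw [sum_det_cons_mul_det_cons_mul_prod]
        linear_combination (ρ p)⁻¹ ^ 2 * (Eᵀ * (E * G * Eᵀ).adjugate * E) k i * hfact

theorem P_squared_props_general (d m : ℕ)
    (ρ : (Fin (d + 1) → ℝ) → ℝ)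
    (x : Fin m → (Fin (d + 1) → ℝ) → ℝ)
    (gbar : (Fin (d + 1) → ℝ) → Matrix (Fin m) (Fin m) ℝ)
    (p : Fin (d + 1) → ℝ)
    (hgbar : (gbar p).PosDef)
    (gind : Matrix (Fin (d + 1)) (Fin (d + 1)) ℝ)
    (hgind : gind = Matrix.of fun a c =>
      ∑ i, ∑ j, gbar p i j * pd a (x i) p * pd c (x j) p)
    (hgpos : 0 < gind.det)
    (γ : ℝ) (hγ : γ = Real.sqrt gind.det / ρ p)
    (P : Fin m → (Fin d → Fin m) → ℝ)
    (hP : P = fun i J => (Real.sqrt (d.factorial : ℝ))⁻¹ *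
      nb ρ (Fin.cons (x i) fun l => x (J l)) p)
    (P2up : Fin m → Fin m → ℝ)
    (hP2up : P2up = fun i k => ∑ J : Fin d → Fin m, ∑ J' : Fin d → Fin m,
      P i J * P k J' * ∏ l : Fin d, gbar p (J l) (J' l))
    (P2X : (Fin m → ℝ) → Fin m → ℝ)
    (hP2X : P2X = fun X i => ∑ j, ∑ k, P2up i j * gbar p j k * X k) :
    (∀ (X : Fin m → ℝ) (i : Fin m),
      P2X X i = γ ^ 2 * ∑ a, ∑ c,
        (∑ j, ∑ k, gbar p j k * X j * pd a (x k) p) * gind⁻¹ a c * pd c (x i) p) ∧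
    (∀ (Y : Fin (d + 1) → ℝ) (i : Fin m),
      P2X (fun j => ∑ a, Y a * pd a (x j) p) i = γ ^ 2 * ∑ a, Y a * pd a (x i) p) := by
  set E := tangentFrame x p
  have hG : (gbar p)ᵀ = gbar p := by
    simpa [conjTranspose_eq_transpose_of_trivial] using hgbar.isHermitian.eq
  have hg : gind = E * gbar p * Eᵀ := by
    rw [hgind, ← of_sum_sum_mul_mul_eq_mul_mul_transpose]
    rfl
  have hP2_entry : ∀ i k, P2up i k = γ ^ 2 * (Eᵀ * gind⁻¹ * E) k i := by
    intro i k
    simp only [hP2up, hP]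
    rw [sum_nb_cons_mul_nb_cons_mul_prod, ← hg, ← smul_eq_mul, ← Matrix.smul_apply,
      ← Matrix.smul_mul, ← Matrix.mul_smul, ← sq_sqrt_det_div_smul_inv hgpos, ← hγ,
      Matrix.mul_smul, Matrix.smul_mul, Matrix.smul_apply, smul_eq_mul]
  have hP2X_vec : ∀ X i, P2X X i = γ ^ 2 * ((E *ᵥ (gbar p *ᵥ X)) ᵥ* (gind⁻¹ * E)) i := by
    intro X i
    rw [← sum_sum_transpose_mul_mul_apply_mul, Finset.mul_sum]
    simp only [hP2X, hP2_entry, Finset.mul_sum]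
    exact Finset.sum_congr rfl fun _ _ => Finset.sum_congr rfl fun _ _ => by ring
  refine ⟨fun X i => ?_, fun Y i => ?_⟩
  · rw [hP2X_vec, mulVec_mulVec_of_transpose_eq hG, ← sum_sum_mul_mul_eq_vecMul]
    rfl
  · change P2X (Y ᵥ* E) i = γ ^ 2 * (Y ᵥ* E) i
    rw [hP2X_vec, hg, mulVec_mulVec_vecMul_vecMul_inv_mul hG (hg ▸ hgpos.ne')]

/-- For `Σ^n ⊂ (M^m, ḡ)` (here `n = d+1`), with
`P^{iJ} = (1/√((n−1)!)) {xⁱ,x^{j₁},…,x^{j_{n−1}}}` and `(P²)^{ik} = P^{iI}P^{kJ}ḡ_{IJ}`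
viewed as a map `TM → TM` by lowering the second index, one has
`P²(X) = γ² ḡ(X,e_a) g^{ab} e_b` for all `X ∈ TM`, and `P²(Y) = γ² Y` for `Y ∈ TΣ`. -/
theorem P_squared_props (d m : ℕ)
    (ρ : (Fin (d + 1) → ℝ) → ℝ)
    (x : Fin m → (Fin (d + 1) → ℝ) → ℝ)
    (gbar : (Fin (d + 1) → ℝ) → Matrix (Fin m) (Fin m) ℝ)
    (p : Fin (d + 1) → ℝ)
    (hgbar : (gbar p).PosDef)
    (hρ : ρ p ≠ 0)
    (gind : Matrix (Fin (d + 1)) (Fin (d + 1)) ℝ)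
    (hgind : gind = Matrix.of fun a c =>
      ∑ i, ∑ j, gbar p i j * pd a (x i) p * pd c (x j) p)
    (hgpos : 0 < gind.det)
    (γ : ℝ) (hγ : γ = Real.sqrt gind.det / ρ p)
    (P : Fin m → (Fin d → Fin m) → ℝ)
    (hP : P = fun i J => (Real.sqrt (d.factorial : ℝ))⁻¹ *
      nb ρ (Fin.cons (x i) fun l => x (J l)) p)
    (P2up : Fin m → Fin m → ℝ)
    (hP2up : P2up = fun i k => ∑ J : Fin d → Fin m, ∑ J' : Fin d → Fin m,
      P i J * P k J' * ∏ l : Fin d, gbar p (J l) (J' l))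
    (P2X : (Fin m → ℝ) → Fin m → ℝ)
    (hP2X : P2X = fun X i => ∑ j, ∑ k, P2up i j * gbar p j k * X k) :
    (∀ (X : Fin m → ℝ) (i : Fin m),
      P2X X i = γ ^ 2 * ∑ a, ∑ c,
        (∑ j, ∑ k, gbar p j k * X j * pd a (x k) p) * gind⁻¹ a c * pd c (x i) p) ∧
    (∀ (Y : Fin (d + 1) → ℝ) (i : Fin m),
      P2X (fun j => ∑ a, Y a * pd a (x j) p) i = γ ^ 2 * ∑ a, Y a * pd a (x i) p) :=
  P_squared_props_general d m ρ x gbar p hgbar gind hgind hgpos γ hγ P hP P2up hP2up P2X hP2X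
end
end
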